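/- arXiv:0711.2862 — 2 statements merged into one kernel-verified Lean document; each statement's English description precedes it below -/
import Mathlib

section
/- Let V = f^{-1}(0) ⊂ ℝ³ for f(x,y,t) = (x² + (y² + t² − y³)²)(x² + (y+1)² − 1), let W = V ∩ {t = 0}, W^{(0)} = W, and W^{(1)} = {(0,0,0), (0,1,0)}. Then W^{(0)} \ MW^{(0)} = {(0,1,0)}, and W^{(0)} ⊃ W^{(1)} is a compatible filtration of W but not the canonical filtration of W (the canonical V^{(1)} for W is the Zariski closure of {(0,1,0)}, namely {(0,1,0)} itself, which differs from W^{(1)}). -/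
open Set Filter Metric

namespace Koike

/-- Semialgebraic subsets of ℝⁿ: the Boolean algebra generated by polynomial
equalities and strict inequalities. -/
inductive IsSemialgebraic : {n : ℕ} → Set (Fin n → ℝ) → Prop
  | polyEq {n : ℕ} (p : MvPolynomial (Fin n) ℝ) :
      IsSemialgebraic {x | MvPolynomial.eval x p = 0}
  | polyLt {n : ℕ} (p : MvPolynomial (Fin n) ℝ) :
      IsSemialgebraic {x | 0 < MvPolynomial.eval x p}
  | union {n : ℕ} {s t : Set (Fin n → ℝ)} :
      IsSemialgebraic s → IsSemialgebraic t → IsSemialgebraic (s ∪ t)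
  | inter {n : ℕ} {s t : Set (Fin n → ℝ)} :
      IsSemialgebraic s → IsSemialgebraic t → IsSemialgebraic (s ∩ t)
  | compl {n : ℕ} {s : Set (Fin n → ℝ)} :
      IsSemialgebraic s → IsSemialgebraic sᶜ

/-- Semialgebraic dimension: the largest `k` such that some coordinate projection
of `S` to ℝᵏ has nonempty interior; `⊥` for the empty set. -/
noncomputable def saDim {n : ℕ} (S : Set (Fin n → ℝ)) : WithBot ℕ∞ :=
  sSup {d : WithBot ℕ∞ | ∃ k : ℕ, d = ((k : ℕ∞) : WithBot ℕ∞) ∧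
    ∃ f : Fin k → Fin n, Function.Injective f ∧
      (interior ((fun x (i : Fin k) => x (f i)) '' S)).Nonempty}

/-- Local dimension of `S` at `x`. -/
noncomputable def localDim {n : ℕ} (S : Set (Fin n → ℝ)) (x : Fin n → ℝ) : WithBot ℕ∞ :=
  ⨅ ε : {ε : ℝ // 0 < ε}, saDim (S ∩ Metric.ball x ε.1)

/-- The main part of a set: points of maximal local dimension. -/
def mainPart {n : ℕ} (S : Set (Fin n → ℝ)) : Set (Fin n → ℝ) :=
  {x ∈ S | localDim S x = saDim S}

/-- Real algebraic subsets of ℝⁿ: common zero sets of finitely many polynomials. -/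
def IsAlgebraicSet {n : ℕ} (S : Set (Fin n → ℝ)) : Prop :=
  ∃ I : Finset (MvPolynomial (Fin n) ℝ), S = {x | ∀ p ∈ I, MvPolynomial.eval x p = 0}

/-- Zariski closure: the smallest algebraic set containing `S`. -/
def zariskiClosure {n : ℕ} (S : Set (Fin n → ℝ)) : Set (Fin n → ℝ) :=
  ⋂₀ {T | IsAlgebraicSet T ∧ S ⊆ T}

/-- A map is semialgebraic on `A` if its graph over `A` is semialgebraic. -/
def IsSemialgebraicMapOn {n k : ℕ} (f : (Fin n → ℝ) → (Fin k → ℝ))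
    (A : Set (Fin n → ℝ)) : Prop :=
  IsSemialgebraic ((fun q : (Fin n → ℝ) × (Fin k → ℝ) => Fin.append q.1 q.2) ''
    {q | q.1 ∈ A ∧ q.2 = f q.1})

/-- Identify ℝᵐ × ℝᵃ with ℝ^(m+a). -/
def appendPair {m a : ℕ} (p : (Fin m → ℝ) × (Fin a → ℝ)) : Fin (m + a) → ℝ :=
  Fin.append p.1 p.2

def IsSemialgebraic2 {m a : ℕ} (S : Set ((Fin m → ℝ) × (Fin a → ℝ))) : Prop :=
  IsSemialgebraic (appendPair '' S)

noncomputable def saDim2 {m a : ℕ} (S : Set ((Fin m → ℝ) × (Fin a → ℝ))) : WithBot ℕ∞ :=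
  saDim (appendPair '' S)

noncomputable def localDim2 {m a : ℕ} (S : Set ((Fin m → ℝ) × (Fin a → ℝ)))
    (p : (Fin m → ℝ) × (Fin a → ℝ)) : WithBot ℕ∞ :=
  localDim (appendPair '' S) (appendPair p)

def mainPart2 {m a : ℕ} (S : Set ((Fin m → ℝ) × (Fin a → ℝ))) :
    Set ((Fin m → ℝ) × (Fin a → ℝ)) :=
  {p ∈ S | localDim2 S p = saDim2 S}

def zariskiClosure2 {m a : ℕ} (S : Set ((Fin m → ℝ) × (Fin a → ℝ))) :
    Set ((Fin m → ℝ) × (Fin a → ℝ)) :=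
  appendPair ⁻¹' (zariskiClosure (appendPair '' S))

def IsSemialgebraicGraphOn {m a : ℕ}
    (h : ((Fin m → ℝ) × (Fin a → ℝ)) → ((Fin m → ℝ) × (Fin a → ℝ)))
    (S : Set ((Fin m → ℝ) × (Fin a → ℝ))) : Prop :=
  IsSemialgebraic ((fun q : ((Fin m → ℝ) × (Fin a → ℝ)) × ((Fin m → ℝ) × (Fin a → ℝ)) =>
    Fin.append (appendPair q.1) (appendPair q.2)) '' {q | q.1 ∈ S ∧ q.2 = h q.1})

/-- A Nash submanifold of ℝᵐ of dimension `d`: a semialgebraic set which is locally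
real-analytically straightened to a `d`-dimensional coordinate slice. -/
def IsNashSubmanifold {m : ℕ} (d : ℕ) (N : Set (Fin m → ℝ)) : Prop :=
  IsSemialgebraic N ∧
  ∀ x ∈ N, ∃ (U V : Set (Fin m → ℝ)) (φ ψ : (Fin m → ℝ) → (Fin m → ℝ)),
    IsOpen U ∧ x ∈ U ∧ IsOpen V ∧ AnalyticOn ℝ φ U ∧ AnalyticOn ℝ ψ V ∧
    Set.BijOn φ U V ∧ (∀ y ∈ U, ψ (φ y) = y) ∧
    φ '' (N ∩ U) = V ∩ {y | ∀ i : Fin m, d ≤ (i : ℕ) → y i = 0}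

def stdOpenSimplex (d : ℕ) : Set (Fin d → ℝ) :=
  {x | (∀ i, 0 < x i) ∧ ∑ i, x i < 1}

/-- A Nash open simplex: a Nash manifold Nash-diffeomorphic to an open simplex. -/
def IsNashOpenSimplex {m : ℕ} (S : Set (Fin m → ℝ)) : Prop :=
  ∃ d : ℕ, IsNashSubmanifold d S ∧
    ∃ (φ : (Fin m → ℝ) → (Fin d → ℝ)) (ψ : (Fin d → ℝ) → (Fin m → ℝ)),
      Set.BijOn φ S (stdOpenSimplex d) ∧ (∀ y ∈ S, ψ (φ y) = y) ∧
      ContDiffOn ℝ (⊤ : ℕ∞) φ S ∧ ContDiffOn ℝ (⊤ : ℕ∞) ψ (stdOpenSimplex d) ∧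
      IsSemialgebraicMapOn φ S ∧ IsSemialgebraicMapOn ψ (stdOpenSimplex d)

/-- A `t`-level preserving semialgebraic trivialization of `V` over `Q` with fibre the
`t₀`-fibre of `V`. -/
def IsSATrivialization {m a : ℕ} (V : Set ((Fin m → ℝ) × (Fin a → ℝ))) (Q : Set (Fin a → ℝ))
    (t₀ : Fin a → ℝ) (h : ((Fin m → ℝ) × (Fin a → ℝ)) → ((Fin m → ℝ) × (Fin a → ℝ))) : Prop :=
  (∀ p ∈ V, (h p).2 = p.2) ∧
  Set.BijOn h V ({x | (x, t₀) ∈ V} ×ˢ Q) ∧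
  ContinuousOn h V ∧
  (∃ g, Set.InvOn g h V ({x | (x, t₀) ∈ V} ×ˢ Q) ∧
    ContinuousOn g ({x | (x, t₀) ∈ V} ×ˢ Q)) ∧
  IsSemialgebraicGraphOn h V

/-- Whitney (b)-regularity of the pair `(R, U)` at `y`: every limit of unit secant
vectors between points of `R` and `U` approaching `y` is asymptotically contained in the
tangent spaces of `R`. -/
def WhitneyRegB {E : Type*} [NormedAddCommGroup E] [NormedSpace ℝ E]
    (R U : Set E) (y : E) : Prop :=
  ∀ (x z : ℕ → E), (∀ n, x n ∈ R) → (∀ n, z n ∈ U) →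
    Tendsto x atTop (nhds y) → Tendsto z atTop (nhds y) →
    ∀ v : E, Tendsto (fun n => (‖x n - z n‖)⁻¹ • (x n - z n)) atTop (nhds v) →
      Tendsto (fun n =>
        Metric.infDist v ((Submodule.span ℝ (tangentConeAt ℝ R (x n)) : Submodule ℝ E) : Set E))
        atTop (nhds 0)

/-- A complex submanifold of ℂᴺ of complex dimension `d`, via holomorphic straightening. -/
def IsComplexSubmanifold {N : ℕ} (d : ℕ) (C : Set (Fin N → ℂ)) : Prop :=
  ∀ x ∈ C, ∃ (U V : Set (Fin N → ℂ)) (φ ψ : (Fin N → ℂ) → (Fin N → ℂ)),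
    IsOpen U ∧ x ∈ U ∧ IsOpen V ∧ DifferentiableOn ℂ φ U ∧ DifferentiableOn ℂ ψ V ∧
    Set.BijOn φ U V ∧ (∀ y ∈ U, ψ (φ y) = y) ∧
    φ '' (C ∩ U) = V ∩ {z | ∀ i : Fin N, d ≤ (i : ℕ) → z i = 0}

/-- A real submanifold of ℂⁿ of real dimension `d`, via smooth straightening onto a real
`d`-dimensional coordinate slice. -/
def IsRealSubmanifoldC {n : ℕ} (d : ℕ) (R : Set (Fin n → ℂ)) : Prop :=
  ∀ x ∈ R, ∃ (U V : Set (Fin n → ℂ)) (φ ψ : (Fin n → ℂ) → (Fin n → ℂ)),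
    IsOpen U ∧ x ∈ U ∧ IsOpen V ∧ ContDiffOn ℝ (⊤ : ℕ∞) φ U ∧ ContDiffOn ℝ (⊤ : ℕ∞) ψ V ∧
    Set.BijOn φ U V ∧ (∀ y ∈ U, ψ (φ y) = y) ∧
    φ '' (R ∩ U) = V ∩ {z | (∀ i, (z i).im = 0) ∧ ∀ i : Fin n, d ≤ (i : ℕ) → z i = 0}

/-- A Nash map on a subset of ℝᵐ × ℝᵃ: real-analytic with semialgebraic graph. -/
def IsNashMap2 {m a k : ℕ} (F : ((Fin m → ℝ) × (Fin a → ℝ)) → (Fin k → ℝ))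
    (S : Set ((Fin m → ℝ) × (Fin a → ℝ))) : Prop :=
  AnalyticOn ℝ F S ∧
  IsSemialgebraic ((fun q : ((Fin m → ℝ) × (Fin a → ℝ)) × (Fin k → ℝ) =>
    Fin.append (appendPair q.1) q.2) '' {q | q.1 ∈ S ∧ q.2 = F q.1})

/-- `f_t⁻¹(0) ∩ S(f_t)`: singular points of `f_t = F(·,t)` on `N` lying in the zero set,
where singular means the differential does not map the tangent space of `N` onto ℝᵏ. -/
def singularZeroFiber {m a k : ℕ} (N : Set (Fin m → ℝ))
    (F : ((Fin m → ℝ) × (Fin a → ℝ)) → (Fin k → ℝ)) (t : Fin a → ℝ) : Set (Fin m → ℝ) :=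
  {x ∈ N | F (x, t) = 0 ∧
    ¬ ∀ w : Fin k → ℝ, ∃ v ∈ Submodule.span ℝ (tangentConeAt ℝ N x),
      fderiv ℝ (fun y => F (y, t)) x v = w}


/-! ### Auxiliary lemmas -/

def dimSet {n : ℕ} (S : Set (Fin n → ℝ)) : Set (WithBot ℕ∞) :=
  {d : WithBot ℕ∞ | ∃ k : ℕ, d = ((k : ℕ∞) : WithBot ℕ∞) ∧
    ∃ f : Fin k → Fin n, Function.Injective f ∧
      (interior ((fun x (i : Fin k) => x (f i)) '' S)).Nonempty}

lemma saDim_eq_sSup {n : ℕ} (S : Set (Fin n → ℝ)) : saDim S = sSup (dimSet S) := rfl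

lemma saDim_mono {n : ℕ} {S T : Set (Fin n → ℝ)} (h : S ⊆ T) : saDim S ≤ saDim T := by
  apply sSup_le_sSup
  rintro d ⟨k, rfl, f, hf, hne⟩
  exact ⟨k, rfl, f, hf, hne.mono (interior_mono (image_mono h))⟩

lemma zero_le_saDim {n : ℕ} {S : Set (Fin n → ℝ)} (h : S.Nonempty) :
    (0 : WithBot ℕ∞) ≤ saDim S := by
  refine le_sSup ⟨0, by simp, Fin.elim0, fun x => x.elim0, ?_⟩
  obtain ⟨x, hx⟩ := h
  have : (fun x (i : Fin 0) => x (Fin.elim0 i)) '' S = univ := by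
    apply eq_univ_of_forall
    intro y
    exact ⟨x, hx, funext fun i => i.elim0⟩
  rw [this, interior_univ]
  exact univ_nonempty

lemma interior_eq_empty_of_coord {k : ℕ} (S : Set (Fin k → ℝ)) (i : Fin k)
    (h : ∀ y ∈ S, y i = 0) : interior S = ∅ := by
  by_contra hne
  obtain ⟨y, hy⟩ := nonempty_iff_ne_empty.2 hne
  obtain ⟨ε, hε, hball⟩ := Metric.isOpen_iff.1 isOpen_interior y hy
  have hy0 : y i = 0 := h y (interior_subset hy)
  set z := Function.update y i (ε/2) with hz
  have hzball : z ∈ ball y ε := by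
    rw [mem_ball, dist_pi_lt_iff hε]
    intro j
    by_cases hj : j = i
    · subst hj; simp [hz, Real.dist_eq, hy0, abs_of_pos hε]; linarith
    · simp [hz, Function.update_of_ne hj]; exact hε
  have := h z (interior_subset (hball hzball))
  simp [hz] at this
  linarith

lemma interior_eq_empty_of_finite {k : ℕ} (S : Set (Fin k → ℝ)) (i : Fin k)
    (h : S.Finite) : interior S = ∅ := by
  by_contra hne
  obtain ⟨y, hy⟩ := nonempty_iff_ne_empty.2 hne
  obtain ⟨ε, hε, hball⟩ := Metric.isOpen_iff.1 isOpen_interior y hy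
  have hsub : (fun t => Function.update y i t) '' Ioo (y i) (y i + ε/2) ⊆ S := by
    rintro _ ⟨t, ht, rfl⟩
    apply interior_subset (hball _)
    rw [mem_ball, dist_pi_lt_iff hε]
    intro j
    by_cases hj : j = i
    · subst hj
      simp only [Function.update_self, Real.dist_eq]
      rw [abs_of_nonneg (by linarith [ht.1])]
      linarith [ht.2]
    · simp [Function.update_of_ne hj, hε]
  have hinf : ((fun t => Function.update y i t) '' Ioo (y i) (y i + ε/2)).Infinite := by
    apply Set.Infinite.image
    · intro a _ b _ hab
      have := congrFun hab i
      simpa using this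
    · exact Set.Ioo_infinite (by linarith)
  exact hinf (h.subset hsub)

lemma interior_eq_empty_curve (i0 i1 : Fin 2) (hne : i0 ≠ i1) (S : Set (Fin 2 → ℝ))
    (h : ∀ y ∈ S, (y i0) ^ 2 + (y i1 + 1) ^ 2 - 1 = 0 ∨ (y i0 = 0 ∧ y i1 = 1)) :
    interior S = ∅ := by
  by_contra hni
  obtain ⟨y, hy⟩ := nonempty_iff_ne_empty.2 hni
  obtain ⟨ε, hε, hball⟩ := Metric.isOpen_iff.1 isOpen_interior y hy
  set c := (y i0) ^ 2 with hc
  set p : Polynomial ℝ :=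
    (Polynomial.C c + (Polynomial.X + 1) ^ 2 - 1) * (Polynomial.X - 1) with hp
  have hroots : ∀ t ∈ Ioo (y i1) (y i1 + ε/2), p.IsRoot t := by
    intro t ht
    have hz : Function.update y i1 t ∈ S := by
      apply interior_subset (hball _)
      rw [mem_ball, dist_pi_lt_iff hε]
      intro j
      by_cases hj : j = i1
      · subst hj
        simp only [Function.update_self, Real.dist_eq]
        rw [abs_of_nonneg (by linarith [ht.1])]
        linarith [ht.2]
      · simp [Function.update_of_ne hj, hε]
    have := h _ hz
    rw [Function.update_of_ne (by simpa using hne), Function.update_self] at this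
    simp only [Polynomial.IsRoot, hp, Polynomial.eval_mul, Polynomial.eval_sub,
      Polynomial.eval_add, Polynomial.eval_pow, Polynomial.eval_C, Polynomial.eval_X,
      Polynomial.eval_one]
    rcases this with h1 | h2
    · rw [h1]; ring
    · rw [h2.2]; ring
  have hp0 : p = 0 := by
    apply Polynomial.eq_zero_of_infinite_isRoot
    apply Set.Infinite.mono (s := Ioo (y i1) (y i1 + ε/2))
    · intro t ht; exact hroots t ht
    · exact Set.Ioo_infinite (by linarith)
  have : Polynomial.eval 3 p = 0 := by rw [hp0]; simp
  simp only [hp, Polynomial.eval_mul, Polynomial.eval_sub, Polynomial.eval_add,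
    Polynomial.eval_pow, Polynomial.eval_C, Polynomial.eval_X, Polynomial.eval_one] at this
  nlinarith [sq_nonneg (y i0), this]

/-- The circle-plus-point slice. -/
def W₀ : Set (Fin 3 → ℝ) :=
  {p | ((p 0) ^ 2 + (p 1 + 1) ^ 2 = 1 ∨ (p 0 = 0 ∧ p 1 = 1)) ∧ p 2 = 0}

lemma one_mem_dimSet_aux (x : Fin 3 → ℝ) (j : Fin 3) (g : ℝ → Fin 3 → ℝ)
    (hg : Continuous g) (s0 η : ℝ) (hη : 0 < η) (hgs0 : g s0 = x)
    (hmem : ∀ s ∈ Ioo (s0 - η) (s0 + η), g s ∈ W₀)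
    (hcoord : ∀ s, g s j = s) {ε : ℝ} (hε : 0 < ε) :
    (1 : WithBot ℕ∞) ∈ dimSet (W₀ ∩ ball x ε) := by
  refine ⟨1, by simp, fun _ => j, fun a b _ => Subsingleton.elim a b, ?_⟩
  have hU : IsOpen (g ⁻¹' ball x ε) := (Metric.isOpen_ball).preimage hg
  have hs0 : s0 ∈ g ⁻¹' ball x ε := by
    simp [Set.mem_preimage, hgs0, Metric.mem_ball, hε]
  obtain ⟨δ, hδ, hball⟩ := Metric.isOpen_iff.1 hU s0 hs0
  set r := min δ η with hr
  have hrpos : 0 < r := lt_min hδ hη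
  set U' : Set (Fin 1 → ℝ) := {y | y 0 ∈ Ioo (s0 - r) (s0 + r)} with hU'
  have hopen : IsOpen U' := (isOpen_Ioo).preimage (continuous_apply 0)
  have hne : U'.Nonempty := ⟨fun _ => s0, by constructor <;> simp <;> linarith⟩
  have hsub : U' ⊆ (fun x (i : Fin 1) => x ((fun _ => j) i)) '' (W₀ ∩ ball x ε) := by
    intro y hy
    set s := y 0 with hs
    have h1 : |s - s0| < r := by
      rw [abs_lt]; exact ⟨by linarith [hy.1], by linarith [hy.2]⟩
    have h2 := abs_lt.1 h1
    have hrδ : r ≤ δ := min_le_left δ η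
    have hrη : r ≤ η := min_le_right δ η
    refine ⟨g s, ⟨hmem s ⟨by linarith [h2.1], by linarith [h2.2]⟩, ?_⟩, ?_⟩
    · exact hball (by rw [mem_ball, Real.dist_eq]; exact lt_of_lt_of_le h1 hrδ)
    · funext i
      have hi : i = 0 := Subsingleton.elim i 0
      simp only [hi, hcoord, hs]
  exact hne.mono (interior_maximal hsub hopen)

lemma continuous_vec3 {f g h : ℝ → ℝ} (hf : Continuous f) (hg : Continuous g)
    (hh : Continuous h) : Continuous fun s => ![f s, g s, h s] := by
  apply continuous_pi; intro i; fin_cases i <;> simpa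

lemma one_mem_dimSet_circle (x : Fin 3 → ℝ) (hx0 : (x 0) ^ 2 + (x 1 + 1) ^ 2 = 1)
    (hx2 : x 2 = 0) {ε : ℝ} (hε : 0 < ε) : (1 : WithBot ℕ∞) ∈ dimSet (W₀ ∩ ball x ε) := by
  by_cases h0 : x 0 = 0
  · have hsg : (x 1 + 1) ^ 2 = 1 := by rw [h0] at hx0; linarith
    set g : ℝ → Fin 3 → ℝ := fun s => ![s, (x 1 + 1) * Real.sqrt (1 - s ^ 2) - 1, 0]
      with hgdef
    have hgc : Continuous g := by
      apply continuous_vec3 continuous_id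
      · exact ((continuous_const.mul (Real.continuous_sqrt.comp (by fun_prop))).sub
          continuous_const)
      · exact continuous_const
    have hg0 : g 0 = x := by
      funext i
      fin_cases i
      · exact h0.symm
      · show (x 1 + 1) * Real.sqrt (1 - (0:ℝ) ^ 2) - 1 = x 1
        norm_num
      · exact hx2.symm
    refine one_mem_dimSet_aux x 0 g hgc 0 1 one_pos hg0 ?_ (by intro s; simp [hgdef]) hε
    intro s hs
    simp only [zero_sub, zero_add] at hs
    have h1 : 1 - s ^ 2 ≥ 0 := by nlinarith [hs.1, hs.2]
    have hsq : Real.sqrt (1 - s ^ 2) ^ 2 = 1 - s ^ 2 := Real.sq_sqrt h1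
    constructor
    · left
      show s ^ 2 + ((x 1 + 1) * Real.sqrt (1 - s ^ 2) - 1 + 1) ^ 2 = 1
      have : ((x 1 + 1) * Real.sqrt (1 - s ^ 2)) ^ 2 = 1 - s ^ 2 := by
        rw [mul_pow, hsq, hsg]; ring
      nlinarith [this]
    · simp [hgdef]
  · set sg : ℝ := if 0 ≤ x 0 then 1 else -1 with hsgdef
    have hsg2 : sg ^ 2 = 1 := by rw [hsgdef]; split_ifs <;> norm_num
    have hx0pos : 0 < (x 0) ^ 2 := by positivity
    have habs : |x 1 + 1| < 1 := by
      rw [← sq_lt_one_iff_abs_lt_one]; nlinarith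
    set η : ℝ := 1 - |x 1 + 1| with hηdef
    have hη : 0 < η := by simp [hηdef]; linarith
    set g : ℝ → Fin 3 → ℝ := fun s => ![sg * Real.sqrt (1 - (s + 1) ^ 2), s, 0] with hgdef
    have hgc : Continuous g := by
      apply continuous_vec3 _ continuous_id continuous_const
      exact continuous_const.mul (Real.continuous_sqrt.comp (by fun_prop))
    have hg0 : g (x 1) = x := by
      funext i
      fin_cases i
      · show sg * Real.sqrt (1 - (x 1 + 1) ^ 2) = x 0
        have : 1 - (x 1 + 1) ^ 2 = (x 0) ^ 2 := by linarith
        rw [this, Real.sqrt_sq_eq_abs, hsgdef]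
        split_ifs with h
        · rw [one_mul, abs_of_nonneg h]
        · rw [abs_of_neg (lt_of_not_ge h)]; ring
      · rfl
      · exact hx2.symm
    refine one_mem_dimSet_aux x 1 g hgc (x 1) η hη hg0 ?_ (by intro s; simp [hgdef]) hε
    intro s hs
    have habs2 : |s + 1| < 1 := by
      have h1 : |s - x 1| < η := by
        rw [abs_lt]; exact ⟨by linarith [hs.1], by linarith [hs.2]⟩
      calc |s + 1| ≤ |s - x 1| + |x 1 + 1| := by
            have : s + 1 = (s - x 1) + (x 1 + 1) := by ring
            rw [this]; exact abs_add_le _ _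
        _ < 1 := by simp [hηdef] at h1; linarith
    have hle : (s + 1) ^ 2 ≤ 1 := by nlinarith [abs_nonneg (s + 1), sq_abs (s + 1)]
    have hsq : Real.sqrt (1 - (s + 1) ^ 2) ^ 2 = 1 - (s + 1) ^ 2 :=
      Real.sq_sqrt (by linarith)
    constructor
    · left
      show (sg * Real.sqrt (1 - (s + 1) ^ 2)) ^ 2 + (s + 1) ^ 2 = 1
      rw [mul_pow, hsq, hsg2]; ring
    · simp [hgdef]

lemma fin3_cases {j : Fin 3} (h0 : j ≠ 0) (h2 : j ≠ 2) : j = 1 := by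
  have hlt := j.isLt
  have h0' : j.val ≠ 0 := fun h => h0 (Fin.ext h)
  have h2' : j.val ≠ 2 := fun h => h2 (Fin.ext h)
  exact Fin.ext (by omega)

lemma dimSet_le_one {S : Set (Fin 3 → ℝ)} (hS : S ⊆ W₀) :
    ∀ d ∈ dimSet S, d ≤ (1 : WithBot ℕ∞) := by
  rintro d ⟨k, rfl, f, hf, hne⟩
  have hk : k ≤ 1 := by
    by_contra hk
    push_neg at hk
    by_cases hA : ∃ i, f i = 2
    · obtain ⟨i, hi⟩ := hA
      rw [interior_eq_empty_of_coord _ i ?_] at hne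
      · exact not_nonempty_empty hne
      · rintro _ ⟨x, hx, rfl⟩
        show x (f i) = 0
        rw [hi]
        exact (hS hx).2
    · push_neg at hA
      have hk2 : k = 2 := by
        have hinj : Function.Injective (fun i => if f i = 0 then (0 : Fin 2) else 1) := by
          intro a b hab
          apply hf
          simp only at hab
          by_cases ha : f a = 0 <;> by_cases hb : f b = 0
          · rw [ha, hb]
          · exfalso; rw [if_pos ha, if_neg hb] at hab; exact absurd hab (by decide)
          · exfalso; rw [if_neg ha, if_pos hb] at hab; exact absurd hab (by decide)
          · rw [fin3_cases ha (hA a), fin3_cases hb (hA b)]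
        have := Fintype.card_le_of_injective _ hinj
        simp at this
        omega
      subst hk2
      have key : ∀ (i0 i1 : Fin 2), i0 ≠ i1 → f i0 = 0 → f i1 = 1 → False := by
        intro i0 i1 hne01 hfi0 hfi1
        rw [interior_eq_empty_curve i0 i1 hne01 _ ?_] at hne
        · exact not_nonempty_empty hne
        · rintro _ ⟨x, hx, rfl⟩
          simp only [hfi0, hfi1]
          rcases (hS hx).1 with h | h
          · left; linarith
          · right; exact h
      by_cases hf0 : f 0 = 0
      · exact key 0 1 (by decide) hf0
          (fin3_cases (fun h => (by decide : (0:Fin 2) ≠ 1) (hf (hf0.trans h.symm))) (hA 1))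
      · have hf01 : f 0 = 1 := fin3_cases hf0 (hA 0)
        have hf10 : f 1 = 0 := by
          have h1 : f 1 ≠ 1 := fun h => (by decide : (1:Fin 2) ≠ 0) (hf (h.trans hf01.symm))
          have h2 : f 1 ≠ 2 := hA 1
          have hlt := (f 1).isLt
          have h1' : (f 1).val ≠ 1 := fun h => h1 (Fin.ext h)
          have h2' : (f 1).val ≠ 2 := fun h => h2 (Fin.ext h)
          exact Fin.ext (by omega)
        exact key 1 0 (by decide) hf10 hf01
  exact_mod_cast hk

lemma saDim_W₀ : saDim W₀ = 1 := by
  apply le_antisymm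
  · exact sSup_le (dimSet_le_one Subset.rfl)
  · have h0 : ((![0,0,0] : Fin 3 → ℝ) 0) ^ 2 + ((![0,0,0] : Fin 3 → ℝ) 1 + 1) ^ 2 = 1 := by
      norm_num
    have h2 : (![0,0,0] : Fin 3 → ℝ) 2 = 0 := by rfl
    have hmem := one_mem_dimSet_circle ![0,0,0] h0 h2 (ε := 1) one_pos
    exact (le_sSup hmem).trans (saDim_mono inter_subset_left)

lemma localDim_circle (x : Fin 3 → ℝ) (hx0 : (x 0) ^ 2 + (x 1 + 1) ^ 2 = 1)
    (hx2 : x 2 = 0) : localDim W₀ x = saDim W₀ := by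
  apply le_antisymm
  · exact (iInf_le _ ⟨1, one_pos⟩).trans (saDim_mono inter_subset_left)
  · refine le_iInf fun ε => ?_
    rw [saDim_W₀]
    exact le_sSup (one_mem_dimSet_circle x hx0 hx2 ε.2)

lemma saDim_finite {n : ℕ} {S : Set (Fin n → ℝ)} (hfin : S.Finite) (hne : S.Nonempty)
    (i : Fin n) : saDim S = 0 := by
  apply le_antisymm _ (zero_le_saDim hne)
  apply sSup_le
  rintro d ⟨k, rfl, f, hf, hI⟩
  match k with
  | 0 => simp
  | k + 1 =>
    exfalso
    rw [interior_eq_empty_of_finite _ (0 : Fin (k+1)) (hfin.image _)] at hI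
    exact not_nonempty_empty hI

lemma localDim_finite {n : ℕ} {S : Set (Fin n → ℝ)} (hfin : S.Finite) (i : Fin n)
    {x : Fin n → ℝ} (hx : x ∈ S) : localDim S x = 0 := by
  apply le_antisymm
  · exact (iInf_le _ ⟨1, one_pos⟩).trans
      ((saDim_mono inter_subset_left).trans_eq (saDim_finite hfin ⟨x, hx⟩ i))
  · exact le_iInf fun ε => zero_le_saDim ⟨x, hx, mem_ball_self ε.2⟩

lemma mainPart_finite {n : ℕ} {S : Set (Fin n → ℝ)} (hfin : S.Finite) (i : Fin n)
    {x : Fin n → ℝ} (hx : x ∈ S) : x ∈ mainPart S :=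
  ⟨hx, by rw [localDim_finite hfin i hx, saDim_finite hfin ⟨x, hx⟩ i]⟩

lemma e1_mem_W₀ : (![0,1,0] : Fin 3 → ℝ) ∈ W₀ := by
  refine ⟨Or.inr ⟨?_, ?_⟩, ?_⟩ <;> norm_num <;> rfl

lemma localDim_e1 : localDim W₀ ![0,1,0] = 0 := by
  have hkey : W₀ ∩ ball (![0,1,0] : Fin 3 → ℝ) (1/2) = {![0,1,0]} := by
    ext p
    constructor
    · rintro ⟨⟨hc, h2⟩, hb⟩
      have hd := (dist_pi_lt_iff (by norm_num)).1 (mem_ball.1 hb) 1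
      rw [Real.dist_eq] at hd
      have he1 : (![0,1,0] : Fin 3 → ℝ) 1 = 1 := by norm_num
      rw [he1] at hd
      have hd' := abs_lt.1 hd
      rcases hc with h | h
      · exfalso
        nlinarith [sq_nonneg (p 0), sq_nonneg (p 1 + 1), h, hd'.1, hd'.2]
      · show p = ![0,1,0]
        funext i
        fin_cases i
        · simpa using h.1
        · simpa using h.2
        · simpa using h2
    · rintro rfl
      exact ⟨e1_mem_W₀, mem_ball_self (by norm_num)⟩
  apply le_antisymm
  · refine (iInf_le _ ⟨1/2, by norm_num⟩).trans ?_
    rw [hkey]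
    exact (saDim_finite (finite_singleton _) ⟨_, rfl⟩ 0).le
  · exact le_iInf fun ε => zero_le_saDim ⟨_, e1_mem_W₀, mem_ball_self ε.2⟩

lemma zariskiClosure_singleton {n : ℕ} (x₀ : Fin n → ℝ) :
    zariskiClosure {x₀} = {x₀} := by
  apply subset_antisymm
  · apply sInter_subset_of_mem
    refine ⟨⟨Finset.image (fun i => MvPolynomial.X i - MvPolynomial.C (x₀ i))
      Finset.univ, ?_⟩, Subset.rfl⟩
    ext x
    simp only [Set.mem_setOf_eq, Finset.mem_image, Set.mem_singleton_iff]
    constructor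
    · rintro rfl p ⟨i, _, rfl⟩
      simp [map_sub, MvPolynomial.eval_X, MvPolynomial.eval_C]
    · intro h
      funext i
      have := h _ ⟨i, Finset.mem_univ i, rfl⟩
      rw [map_sub, MvPolynomial.eval_X, MvPolynomial.eval_C, sub_eq_zero] at this
      exact this
  · exact subset_sInter fun T hT => hT.2

lemma W_eq_W₀ (V : Set (Fin 3 → ℝ))
    (hV : V = {p : Fin 3 → ℝ |
      ((p 0) ^ 2 + ((p 1) ^ 2 + (p 2) ^ 2 - (p 1) ^ 3) ^ 2) *
        ((p 0) ^ 2 + (p 1 + 1) ^ 2 - 1) = 0})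
    (W : Set (Fin 3 → ℝ)) (hW : W = V ∩ {p | p 2 = 0}) : W = W₀ := by
  rw [hW, hV]
  ext p
  simp only [mem_inter_iff, mem_setOf_eq, W₀]
  constructor
  · rintro ⟨hprod, h2⟩
    refine ⟨?_, h2⟩
    rw [h2] at hprod
    rcases mul_eq_zero.1 hprod with hA | hB
    · have h0 : p 0 = 0 := by nlinarith [sq_nonneg (p 0), sq_nonneg ((p 1)^2 + 0^2 - (p 1)^3)]
      have hq : (p 1) ^ 2 - (p 1) ^ 3 = 0 := by nlinarith [sq_nonneg (p 0)]
      rcases mul_eq_zero.1 (show (p 1) ^ 2 * (1 - p 1) = 0 by nlinarith) with h | h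
      · left
        have : p 1 = 0 := by nlinarith
        rw [h0, this]; norm_num
      · right
        exact ⟨h0, by linarith⟩
    · left; linarith
  · rintro ⟨h, h2⟩
    refine ⟨?_, h2⟩
    rw [h2]
    rcases h with h | h
    · exact mul_eq_zero.2 (Or.inr (by linarith))
    · exact mul_eq_zero.2 (Or.inl (by rw [h.1, h.2]; norm_num))

/-- Example 1.6 of the paper, the slice `t = 0`: `W⁽⁰⁾ ⊃ W⁽¹⁾ = {(0,0,0),(0,1,0)}` is a
compatible but not canonical filtration of `W = V ∩ {t = 0}`. -/
theorem example_compatible_not_canonical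
    (V : Set (Fin 3 → ℝ))
    (hV : V = {p : Fin 3 → ℝ |
      ((p 0) ^ 2 + ((p 1) ^ 2 + (p 2) ^ 2 - (p 1) ^ 3) ^ 2) *
        ((p 0) ^ 2 + (p 1 + 1) ^ 2 - 1) = 0})
    (W : Set (Fin 3 → ℝ)) (hW : W = V ∩ {p | p 2 = 0})
    (W1 : Set (Fin 3 → ℝ)) (hW1 : W1 = {![0, 0, 0], ![0, 1, 0]}) :
    W \ mainPart W = {![0, 1, 0]} ∧
    saDim W1 < saDim W ∧
    (W \ mainPart W).Nonempty ∧
    W \ mainPart W ⊆ W1 ∧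
    W = mainPart W ∪ mainPart W1 ∧
    zariskiClosure (W \ mainPart W) = {![0, 1, 0]} ∧
    W1 ≠ zariskiClosure (W \ mainPart W) := by
  have hWW₀ : W = W₀ := W_eq_W₀ V hV W hW
  subst hWW₀
  subst hW1
  set e0 : Fin 3 → ℝ := ![0,0,0] with he0
  set e1 : Fin 3 → ℝ := ![0,1,0] with he1
  have he0c : (e0 0) ^ 2 + (e0 1 + 1) ^ 2 = 1 := by norm_num [he0]
  have he0W : e0 ∈ W₀ := ⟨Or.inl he0c, by norm_num [he0]; rfl⟩
  have hfin : ({e0, e1} : Set (Fin 3 → ℝ)).Finite :=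
    (Set.finite_singleton e1).insert e0
  have hne01 : e0 ≠ e1 := by
    intro h
    have := congrFun h 1
    simp [he0, he1] at this
  have hmain : W₀ \ mainPart W₀ = {e1} := by
    ext p
    constructor
    · rintro ⟨hp, hnot⟩
      rcases hp.1 with hc | hpt
      · exact absurd ⟨hp, localDim_circle p hc hp.2⟩ hnot
      · show p = e1
        funext i
        fin_cases i
        · simpa [he1] using hpt.1
        · simpa [he1] using hpt.2
        · simpa [he1] using hp.2
    · rintro rfl
      refine ⟨e1_mem_W₀, fun hm => ?_⟩
      have := hm.2
      rw [localDim_e1, saDim_W₀] at this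
      exact zero_ne_one this
  refine ⟨hmain, ?_, ?_, ?_, ?_, ?_, ?_⟩
  · rw [saDim_finite hfin ⟨e0, Or.inl rfl⟩ 0, saDim_W₀]
    exact zero_lt_one
  · rw [hmain]; exact ⟨e1, rfl⟩
  · rw [hmain]
    intro p hp
    rw [hp]
    exact Or.inr rfl
  · apply subset_antisymm
    · intro p hp
      rcases hp.1 with hc | hpt
      · exact Or.inl ⟨hp, localDim_circle p hc hp.2⟩
      · right
        have hpe : p = e1 := by
          funext i
          fin_cases i
          · simpa [he1] using hpt.1
          · simpa [he1] using hpt.2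
          · simpa [he1] using hp.2
        rw [hpe]
        exact mainPart_finite hfin 0 (Or.inr rfl)
    · apply union_subset
      · exact fun p hp => hp.1
      · intro p hp
        rcases hp.1 with h | h
        · rw [h]; exact he0W
        · rw [h]; exact e1_mem_W₀
  · rw [hmain]
    exact zariskiClosure_singleton e1
  · rw [hmain, zariskiClosure_singleton]
    intro h
    have : e0 ∈ ({e1} : Set (Fin 3 → ℝ)) := h ▸ Or.inl rfl
    exact hne01 this


end Koike
end

section
/- Let f : ℝ² × ℝ → ℝ be f(x,y,t) = (x² + (y² + t² − y³)²)(x² + (y+1)² − 1) and V = f^{-1}(0). Then V is the union of the cylinder C = {x² + (y+1)² = 1} and the set Z = {x = 0, y² + t² = y³}, and the Zariski closure of V \ MV equals Z, where Z = {(0,y,t) : y² + t² = y³} consists of a connected curve (with y ≥ 1) together with the isolated point (0,0,0). -/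
open Set Filter Metric

namespace Koike

section Aux
open Polynomial




/-- Key fiber lemma: if along coordinate `j` every fiber of `S` consists of roots of a
monic polynomial, then `S` has empty interior. -/
lemma interior_eq_empty_of_fibers {n : ℕ} (S : Set (Fin n → ℝ)) (j : Fin n)
    (h : ∀ w : Fin n → ℝ, ∃ q : Polynomial ℝ, q.Monic ∧
      ∀ c : ℝ, Function.update w j c ∈ S → q.IsRoot c) :
    interior S = ∅ := by
  rw [Set.eq_empty_iff_forall_notMem]
  intro x hx
  obtain ⟨ε, hε, hball⟩ := Metric.isOpen_iff.1 isOpen_interior x hx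
  obtain ⟨q, hq, hroot⟩ := h x
  have hsub : Set.Ioo (x j - ε) (x j + ε) ⊆ {c | q.IsRoot c} := by
    intro c hc
    apply hroot
    apply interior_subset (hball ?_)
    rw [Metric.mem_ball]
    rw [dist_pi_lt_iff hε]
    intro b
    by_cases hb : b = j
    · subst hb
      rw [Function.update_self, Real.dist_eq, abs_lt]
      constructor <;> [linarith [hc.1]; linarith [hc.2]]
    · rw [Function.update_of_ne hb]
      simpa using hε
  have hinf : Set.Infinite {c : ℝ | q.IsRoot c} :=
    (Set.Ioo_infinite (by linarith)).mono hsub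
  exact hq.ne_zero (q.eq_zero_of_infinite_isRoot hinf)

lemma saDim_le_of {n : ℕ} (S : Set (Fin n → ℝ)) (m : ℕ)
    (h : ∀ (k : ℕ) (f : Fin k → Fin n), Function.Injective f → m < k →
      interior ((fun x (i : Fin k) => x (f i)) '' S) = ∅) :
    saDim S ≤ ((m : ℕ∞) : WithBot ℕ∞) := by
  apply sSup_le
  rintro d ⟨k, rfl, f, hf, hne⟩
  by_cases hk : k ≤ m
  · exact WithBot.coe_le_coe.2 (Nat.cast_le.2 hk)
  · rw [h k f hf (not_le.1 hk)] at hne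
    exact absurd hne (by simp)

lemma le_saDim_of {n : ℕ} (S : Set (Fin n → ℝ)) (k : ℕ) (f : Fin k → Fin n)
    (hf : Function.Injective f)
    (hne : (interior ((fun x (i : Fin k) => x (f i)) '' S)).Nonempty) :
    ((k : ℕ∞) : WithBot ℕ∞) ≤ saDim S :=
  le_sSup ⟨k, rfl, f, hf, hne⟩

lemma fin3cases (a : Fin 3) : a = 0 ∨ a = 1 ∨ a = 2 := by revert a; decide

def Vset : Set (Fin 3 → ℝ) :=
  {p | ((p 0) ^ 2 + ((p 1) ^ 2 + (p 2) ^ 2 - (p 1) ^ 3) ^ 2) *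
        ((p 0) ^ 2 + (p 1 + 1) ^ 2 - 1) = 0}

def Zset : Set (Fin 3 → ℝ) :=
  {p | p 0 = 0 ∧ (p 1) ^ 2 + (p 2) ^ 2 = (p 1) ^ 3}

lemma projV_empty (f : Fin 3 → Fin 3) (hf : Function.Injective f) :
    interior ((fun x (i : Fin 3) => x (f i)) '' Vset) = ∅ := by
  have hbij : Function.Bijective f :=
    (Fintype.bijective_iff_injective_and_card f).2 ⟨hf, rfl⟩
  obtain ⟨j0, hj0⟩ := hbij.2 0
  obtain ⟨j1, hj1⟩ := hbij.2 1
  obtain ⟨j2, hj2⟩ := hbij.2 2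
  have h10 : j1 ≠ j0 := fun h => by simp [h, hj0] at hj1
  have h20 : j2 ≠ j0 := fun h => by simp [h, hj0] at hj2
  apply interior_eq_empty_of_fibers _ j0
  intro w
  set A : ℝ := (w j1) ^ 2 + (w j2) ^ 2 - (w j1) ^ 3 with hA
  set B : ℝ := (w j1 + 1) ^ 2 - 1 with hB
  refine ⟨(X ^ 2 + C (A ^ 2)) * (X ^ 2 + C B), ?_, ?_⟩
  · exact (monic_X_pow_add_C _ two_ne_zero).mul (monic_X_pow_add_C _ two_ne_zero)
  · rintro c ⟨x, hxV, hxeq⟩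
    have e0 : x 0 = c := by
      have := congrFun hxeq j0; simpa [hj0] using this
    have e1 : x 1 = w j1 := by
      have := congrFun hxeq j1; simpa [hj1, Function.update_of_ne h10] using this
    have e2 : x 2 = w j2 := by
      have := congrFun hxeq j2; simpa [hj2, Function.update_of_ne h20] using this
    have hV := hxV
    simp only [Vset, Set.mem_setOf_eq, e0, e1, e2] at hV
    simp only [IsRoot, eval_mul, eval_add, eval_pow, eval_X, eval_C]
    linear_combination hV

lemma projZ_empty (k : ℕ) (f : Fin k → Fin 3) (hf : Function.Injective f) (hk : 1 < k) :
    interior ((fun x (i : Fin k) => x (f i)) '' Zset) = ∅ := by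
  have hk3 : k ≤ 3 := by simpa using Fintype.card_le_of_injective f hf
  -- helper: if some index maps to coordinate 0, the image lies in a hyperplane
  have hyp : ∀ j : Fin k, f j = 0 →
      interior ((fun x (i : Fin k) => x (f i)) '' Zset) = ∅ := by
    intro j hj
    apply interior_eq_empty_of_fibers _ j
    intro w
    refine ⟨X, monic_X, ?_⟩
    rintro c ⟨x, hxZ, hxeq⟩
    have := congrFun hxeq j
    simp only [hj] at this
    simp only [Function.update_self] at this
    simpa [IsRoot, ← this] using hxZ.1
  interval_cases k
  · -- k = 2
    have hne : f 0 ≠ f 1 := fun h => absurd (hf h) (by decide)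
    rcases fin3cases (f 0) with h0 | h0 | h0
    · exact hyp 0 h0
    · rcases fin3cases (f 1) with h1 | h1 | h1
      · exact hyp 1 h1
      · exact absurd (h0.trans h1.symm) hne
      · -- f = ![1, 2]
        apply interior_eq_empty_of_fibers _ 1
        intro w
        refine ⟨X ^ 2 + C ((w 0) ^ 2 - (w 0) ^ 3), monic_X_pow_add_C _ two_ne_zero, ?_⟩
        rintro c ⟨x, hxZ, hxeq⟩
        have e1 : x 1 = w 0 := by
          have := congrFun hxeq 0
          simpa [h0, Function.update_of_ne (show (0 : Fin 2) ≠ 1 by decide)] using this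
        have e2 : x 2 = c := by
          have := congrFun hxeq 1; simpa [h1] using this
        have hZ := hxZ.2
        rw [e1, e2] at hZ
        simp only [IsRoot, eval_add, eval_pow, eval_X, eval_C]
        linarith
    · rcases fin3cases (f 1) with h1 | h1 | h1
      · exact hyp 1 h1
      · -- f = ![2, 1]
        apply interior_eq_empty_of_fibers _ 1
        intro w
        have hdeg : (X ^ 2 + C ((w 0) ^ 2) : ℝ[X]).degree < 3 := by
          refine lt_of_le_of_lt (degree_add_le _ _) (max_lt ?_ ?_)
          · rw [degree_X_pow]; decide
          · exact lt_of_le_of_lt degree_C_le (by decide)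
        refine ⟨X ^ 3 - (X ^ 2 + C ((w 0) ^ 2)), monic_X_pow_sub hdeg, ?_⟩
        rintro c ⟨x, hxZ, hxeq⟩
        have e2 : x 2 = w 0 := by
          have := congrFun hxeq 0
          simpa [h0, Function.update_of_ne (show (0 : Fin 2) ≠ 1 by decide)] using this
        have e1 : x 1 = c := by
          have := congrFun hxeq 1; simpa [h1] using this
        have hZ := hxZ.2
        rw [e1, e2] at hZ
        simp only [IsRoot, eval_sub, eval_add, eval_pow, eval_X, eval_C]
        linarith
      · exact absurd (h0.trans h1.symm) hne
  · -- k = 3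
    have hbij : Function.Bijective f :=
      (Fintype.bijective_iff_injective_and_card f).2 ⟨hf, rfl⟩
    obtain ⟨j0, hj0⟩ := hbij.2 0
    exact hyp j0 hj0

lemma cyl_proj (x : Fin 3 → ℝ) (hx : (x 0) ^ 2 + (x 1 + 1) ^ 2 = 1) {ε : ℝ} (hε : 0 < ε) :
    (interior ((fun p (i : Fin 2) => p (![1, 2] i)) '' (Vset ∩ Metric.ball x ε))).Nonempty := by
  classical
  set s : ℝ := if x 0 < 0 then -1 else 1 with hs
  have hs2 : s ^ 2 = 1 := by
    rw [hs]; split_ifs <;> norm_num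
  set G : (Fin 2 → ℝ) → (Fin 3 → ℝ) :=
    fun v => ![s * Real.sqrt (1 - (v 0 + 1) ^ 2), v 0, v 1] with hG
  have hGc : Continuous G := by
    apply continuous_pi
    intro i
    fin_cases i
    · simp only [hG, Matrix.cons_val_zero]
      exact continuous_const.mul (Real.continuous_sqrt.comp (by fun_prop))
    · simpa [hG] using continuous_apply (0 : Fin 2)
    · simpa [hG] using continuous_apply (1 : Fin 2)
  have hG0 : G ![x 1, x 2] = x := by
    funext i
    fin_cases i
    · show s * Real.sqrt (1 - (x 1 + 1) ^ 2) = x 0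
      have h1 : 1 - (x 1 + 1) ^ 2 = (x 0) ^ 2 := by linarith
      rw [h1, Real.sqrt_sq_eq_abs, hs]
      split_ifs with h
      · rw [abs_of_neg h]; ring
      · rw [abs_of_nonneg (not_lt.1 h)]; ring
    · rfl
    · rfl
  have hx1 : -2 ≤ x 1 ∧ x 1 ≤ 0 := by
    constructor <;> nlinarith [sq_nonneg (x 0), sq_nonneg (x 1 + 1)]
  -- continuity at ![x 1, x 2]
  obtain ⟨δ, hδ, hδball⟩ : ∃ δ > 0, ∀ v : Fin 2 → ℝ,
      dist v ![x 1, x 2] < δ → dist (G v) x < ε := by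
    have := Metric.continuous_iff.1 hGc ![x 1, x 2] ε hε
    obtain ⟨δ, hδ, h⟩ := this
    exact ⟨δ, hδ, fun v hv => by rw [← hG0]; exact h v hv⟩
  set W : Set (Fin 2 → ℝ) :=
    (G ⁻¹' Metric.ball x ε) ∩ {v | -2 < v 0 ∧ v 0 < 0} with hW
  have hWopen : IsOpen W := by
    apply IsOpen.inter (hGc.isOpen_preimage _ Metric.isOpen_ball)
    have : {v : Fin 2 → ℝ | -2 < v 0 ∧ v 0 < 0} = (fun v : Fin 2 → ℝ => v 0) ⁻¹' Set.Ioo (-2) 0 := rfl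
    rw [this]
    exact (isOpen_Ioo).preimage (continuous_apply 0)
  have hWne : W.Nonempty := by
    obtain ⟨y₁, hy₁⟩ : ∃ y₁, max (-2) (x 1 - δ) < y₁ ∧ y₁ < min 0 (x 1 + δ) := by
      apply exists_between
      apply max_lt <;> apply lt_min <;> linarith [hx1.1, hx1.2]
    refine ⟨![y₁, x 2], ?_, ?_, ?_⟩
    · apply hδball
      rw [dist_pi_lt_iff hδ]
      intro b
      fin_cases b
      · show dist y₁ (x 1) < δ
        rw [Real.dist_eq, abs_lt]
        constructor
        · linarith [lt_of_le_of_lt (le_max_right (-2) (x 1 - δ)) hy₁.1]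
        · linarith [lt_of_lt_of_le hy₁.2 (min_le_right 0 (x 1 + δ))]
      · show dist (x 2) (x 2) < δ
        simpa using hδ
    · simpa using lt_of_le_of_lt (le_max_left (-2) (x 1 - δ)) hy₁.1
    · simpa using lt_of_lt_of_le hy₁.2 (min_le_left 0 (x 1 + δ))
  have hWsub : W ⊆ (fun p (i : Fin 2) => p (![1, 2] i)) '' (Vset ∩ Metric.ball x ε) := by
    rintro v ⟨hvball, hv1, hv2⟩
    refine ⟨G v, ⟨?_, hvball⟩, ?_⟩
    · show ((G v 0) ^ 2 + ((G v 1) ^ 2 + (G v 2) ^ 2 - (G v 1) ^ 3) ^ 2) *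
        ((G v 0) ^ 2 + (G v 1 + 1) ^ 2 - 1) = 0
      have hnn : 0 ≤ 1 - (v 0 + 1) ^ 2 := by nlinarith
      have hG0v : (G v 0) ^ 2 = 1 - (v 0 + 1) ^ 2 := by
        show (s * Real.sqrt (1 - (v 0 + 1) ^ 2)) ^ 2 = _
        rw [mul_pow, hs2, Real.sq_sqrt hnn, one_mul]
      have hG1v : G v 1 = v 0 := rfl
      rw [hG0v, hG1v]
      ring
    · funext i
      fin_cases i <;> rfl
  exact ⟨_, hWopen.subset_interior_iff.2 hWsub hWne.choose_spec⟩


def Cset : Set (Fin 3 → ℝ) := {p | (p 0) ^ 2 + (p 1 + 1) ^ 2 = 1}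

lemma V_eq : Vset = Cset ∪ Zset := by
  ext p
  simp only [Vset, Cset, Zset, Set.mem_setOf_eq, Set.mem_union]
  constructor
  · intro h
    rcases mul_eq_zero.1 h with h | h
    · right
      have h1 : p 0 ^ 2 = 0 := by
        nlinarith [sq_nonneg (p 0), sq_nonneg ((p 1) ^ 2 + (p 2) ^ 2 - (p 1) ^ 3)]
      have h2 : ((p 1) ^ 2 + (p 2) ^ 2 - (p 1) ^ 3) ^ 2 = 0 := by
        nlinarith [sq_nonneg (p 0)]
      refine ⟨pow_eq_zero_iff two_ne_zero |>.1 h1, ?_⟩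
      have := pow_eq_zero_iff two_ne_zero |>.1 h2
      linarith
    · left; linarith
  · rintro (h | ⟨h0, h1⟩)
    · exact mul_eq_zero.2 (Or.inr (by linarith))
    · refine mul_eq_zero.2 (Or.inl ?_)
      rw [h0]
      have : (p 1) ^ 2 + (p 2) ^ 2 - (p 1) ^ 3 = 0 := by linarith
      rw [this]; ring

lemma saDimV : saDim Vset = ((2 : ℕ∞) : WithBot ℕ∞) := by
  apply le_antisymm
  · apply saDim_le_of _ 2
    intro k f hf hk
    have hk3 : k ≤ 3 := by simpa using Fintype.card_le_of_injective f hf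
    have hk' : k = 3 := by omega
    subst hk'
    exact projV_empty f hf
  · apply le_saDim_of _ 2 ![1, 2] (by decide)
    have h0 : ((![0, 0, 0] : Fin 3 → ℝ) 0) ^ 2 + ((![0, 0, 0] : Fin 3 → ℝ) 1 + 1) ^ 2 = 1 := by
      norm_num
    exact (cyl_proj ![0, 0, 0] h0 one_pos).mono
      (interior_mono (Set.image_mono Set.inter_subset_left))

lemma saDim_ball (x : Fin 3 → ℝ) (hx : (x 0) ^ 2 + (x 1 + 1) ^ 2 = 1) {ε : ℝ} (hε : 0 < ε) :
    saDim (Vset ∩ Metric.ball x ε) = ((2 : ℕ∞) : WithBot ℕ∞) := by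
  apply le_antisymm
  · apply saDim_le_of _ 2
    intro k f hf hk
    have hk3 : k ≤ 3 := by simpa using Fintype.card_le_of_injective f hf
    have hk' : k = 3 := by omega
    subst hk'
    have hmono := interior_mono (Set.image_mono (Set.inter_subset_left :
      Vset ∩ Metric.ball x ε ⊆ Vset) (f := fun x (i : Fin 3) => x (f i)))
    rw [projV_empty f hf] at hmono
    exact Set.eq_empty_of_subset_empty hmono
  · exact le_saDim_of _ 2 ![1, 2] (by decide) (cyl_proj x hx hε)

lemma localDimV_cyl (x : Fin 3 → ℝ) (hx : (x 0) ^ 2 + (x 1 + 1) ^ 2 = 1) :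
    localDim Vset x = ((2 : ℕ∞) : WithBot ℕ∞) := by
  have : Nonempty {ε : ℝ // 0 < ε} := ⟨⟨1, one_pos⟩⟩
  simp only [localDim]
  rw [iInf_congr (fun ε : {ε : ℝ // 0 < ε} => saDim_ball x hx ε.2)]
  exact iInf_const


lemma localDimV_Z (x : Fin 3 → ℝ) (hxZ : x ∈ Zset) (hxC : x ∉ Cset) :
    localDim Vset x ≤ ((1 : ℕ∞) : WithBot ℕ∞) := by
  have hCc : IsClosed Cset := by
    have heq : Cset = (fun p : Fin 3 → ℝ => (p 0) ^ 2 + (p 1 + 1) ^ 2) ⁻¹' {1} := by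
      ext p; simp [Cset]
    rw [heq]
    exact IsClosed.preimage (((continuous_apply (0 : Fin 3)).pow 2).add
      (((continuous_apply (1 : Fin 3)).add continuous_const).pow 2)) isClosed_singleton
  obtain ⟨ε, hε, hball⟩ := Metric.isOpen_iff.1 hCc.isOpen_compl x hxC
  have hsub : Vset ∩ Metric.ball x ε ⊆ Zset := by
    rintro p ⟨hpV, hpb⟩
    rcases (V_eq ▸ hpV : p ∈ Cset ∪ Zset) with h | h
    · exact absurd h (hball hpb)
    · exact h
  have step1 : localDim Vset x ≤ saDim (Vset ∩ Metric.ball x ε) := by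
    simp only [localDim]
    exact iInf_le (fun ε : {ε : ℝ // 0 < ε} => saDim (Vset ∩ Metric.ball x ε.1)) ⟨ε, hε⟩
  calc localDim Vset x ≤ saDim (Vset ∩ Metric.ball x ε) := step1
    _ ≤ ((1 : ℕ∞) : WithBot ℕ∞) := by
        apply saDim_le_of _ 1
        intro k f hf hk
        have hmono := interior_mono (Set.image_mono hsub (f := fun x (i : Fin k) => x (f i)))
        rw [projZ_empty k f hf hk] at hmono
        exact Set.eq_empty_of_subset_empty hmono

lemma ZC_eq (p : Fin 3 → ℝ) (hZ : p ∈ Zset) (hC : p ∈ Cset) : p = ![0, 0, 0] := by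
  obtain ⟨h0, h1⟩ := hZ
  have hC' : (p 1 + 1) ^ 2 = 1 := by
    have := hC; simp only [Cset, Set.mem_setOf_eq] at this; rw [h0] at this; linarith [this]
  have hp1 : p 1 = 0 ∨ p 1 = -2 := by
    have : p 1 * (p 1 + 2) = 0 := by nlinarith
    rcases mul_eq_zero.1 this with h | h
    · exact Or.inl h
    · exact Or.inr (by linarith)
  rcases hp1 with h | h
  · have hp2 : p 2 = 0 := by nlinarith
    funext i; fin_cases i <;> simp [h0, h, hp2]
  · exfalso; nlinarith [sq_nonneg (p 2)]

lemma zeroC : (![0, 0, 0] : Fin 3 → ℝ) ∈ Cset := by simp [Cset]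

lemma mainV : Vset \ mainPart Vset = Zset \ {![0, 0, 0]} := by
  have h12 : ((1 : ℕ∞) : WithBot ℕ∞) < ((2 : ℕ∞) : WithBot ℕ∞) := by
    exact_mod_cast Nat.one_lt_cast.2 one_lt_two
  ext p
  simp only [Set.mem_diff, mainPart, Set.mem_setOf_eq, Set.mem_singleton_iff, not_and]
  constructor
  · rintro ⟨hpV, hpnot⟩
    have hne := hpnot hpV
    by_cases hpC : p ∈ Cset
    · exact absurd ((localDimV_cyl p hpC).trans saDimV.symm) hne
    · have hpZ : p ∈ Zset := by
        rcases (V_eq ▸ hpV : p ∈ Cset ∪ Zset) with h | h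
        · exact absurd h hpC
        · exact h
      exact ⟨hpZ, fun h => hpC (h ▸ zeroC)⟩
  · rintro ⟨hpZ, hp0⟩
    have hpC : p ∉ Cset := fun h => hp0 (ZC_eq p hpZ h)
    refine ⟨V_eq ▸ Set.mem_union_right _ hpZ, fun _ heq => ?_⟩
    rw [saDimV] at heq
    exact absurd heq (ne_of_lt (lt_of_le_of_lt (localDimV_Z p hpZ hpC) h12))


lemma eval_zero_of_curve (p : MvPolynomial (Fin 3) ℝ)
    (h : ∀ s : ℝ, MvPolynomial.eval ![0, s ^ 2 + 1, s ^ 3 + s] p = 0) :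
    MvPolynomial.eval ![0, 0, 0] p = 0 := by
  set v : Fin 3 → Polynomial ℂ := ![0, X ^ 2 + 1, X ^ 3 + X] with hv
  set Q : Polynomial ℂ := MvPolynomial.eval₂ (Polynomial.C.comp (algebraMap ℝ ℂ)) v p with hQ
  have key : ∀ c : ℂ, Q.eval c =
      MvPolynomial.eval₂ (algebraMap ℝ ℂ) ![0, c ^ 2 + 1, c ^ 3 + c] p := by
    intro c
    rw [hQ, ← Polynomial.coe_evalRingHom, MvPolynomial.eval₂_comp_left (evalRingHom c)]
    congr 1
    · ext r : 1
      simp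
    · funext i
      fin_cases i <;> simp [hv]
  have keyR : ∀ w : Fin 3 → ℝ,
      MvPolynomial.eval₂ (algebraMap ℝ ℂ) (fun i => (w i : ℂ)) p
        = ((MvPolynomial.eval w p : ℝ) : ℂ) := by
    intro w
    have := MvPolynomial.eval₂_comp_left (algebraMap ℝ ℂ) (RingHom.id ℝ) w p
    rw [MvPolynomial.eval₂_id, RingHom.comp_id] at this
    have hco : (fun i => ((w i : ℝ) : ℂ)) = ⇑(algebraMap ℝ ℂ) ∘ w := by
      funext i
      simp [Complex.coe_algebraMap]
    rw [hco, ← this, Complex.coe_algebraMap]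
  have hQr : ∀ s : ℝ, Q.eval (s : ℂ) = 0 := by
    intro s
    rw [key s]
    have hvec : (![0, (s : ℂ) ^ 2 + 1, (s : ℂ) ^ 3 + (s : ℂ)] : Fin 3 → ℂ)
        = fun i => (((![0, s ^ 2 + 1, s ^ 3 + s] : Fin 3 → ℝ)) i : ℂ) := by
      funext i; fin_cases i <;> push_cast <;> norm_num
    rw [hvec, keyR, h s]
    norm_num
  have hQ0 : Q = 0 := by
    apply Polynomial.eq_zero_of_infinite_isRoot
    apply Set.Infinite.mono (s := Set.range ((↑) : ℝ → ℂ))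
    · rintro _ ⟨s, rfl⟩
      exact hQr s
    · exact Set.infinite_range_of_injective Complex.ofReal_injective
  have hI := key Complex.I
  rw [hQ0] at hI
  have hvec : (![0, Complex.I ^ 2 + 1, Complex.I ^ 3 + Complex.I] : Fin 3 → ℂ)
      = fun i => (((![0, 0, 0] : Fin 3 → ℝ)) i : ℂ) := by
    funext i
    fin_cases i <;> simp [pow_succ, Complex.I_mul_I]
  rw [hvec, keyR] at hI
  rw [Polynomial.eval_zero] at hI
  exact_mod_cast hI.symm

lemma Z_alg : IsAlgebraicSet Zset := by
  refine ⟨{MvPolynomial.X 0,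
    MvPolynomial.X 1 ^ 2 + MvPolynomial.X 2 ^ 2 - MvPolynomial.X 1 ^ 3}, ?_⟩
  ext x
  simp only [Zset, Set.mem_setOf_eq, Finset.mem_insert, Finset.mem_singleton]
  constructor
  · rintro ⟨h0, h1⟩ q hq
    rcases hq with rfl | rfl <;> simp [h0] <;> linarith
  · intro hq
    have h0 := hq _ (Or.inl rfl)
    have h1 := hq _ (Or.inr rfl)
    simp at h0 h1
    exact ⟨h0, by linarith⟩

lemma curve_mem (s : ℝ) : (![0, s ^ 2 + 1, s ^ 3 + s] : Fin 3 → ℝ) ∈ Zset \ {![0, 0, 0]} := by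
  constructor
  · refine ⟨rfl, ?_⟩
    show (s ^ 2 + 1) ^ 2 + (s ^ 3 + s) ^ 2 = (s ^ 2 + 1) ^ 3
    ring
  · intro hmem
    have h1 := congrFun (Set.mem_singleton_iff.1 hmem) 1
    simp at h1
    nlinarith [sq_nonneg s]

lemma zar : zariskiClosure (Zset \ {![0, 0, 0]}) = Zset := by
  apply subset_antisymm
  · exact Set.sInter_subset_of_mem ⟨Z_alg, Set.diff_subset⟩
  · rintro z hz T ⟨⟨I, rfl⟩, hsub⟩
    simp only [Set.mem_setOf_eq]
    intro p hp
    by_cases hz0 : z = ![0, 0, 0]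
    · subst hz0
      apply eval_zero_of_curve
      intro s
      exact hsub (curve_mem s) p hp
    · exact hsub ⟨hz, by simpa using hz0⟩ p hp


lemma Zy_ge (p : Fin 3 → ℝ) (hp : p ∈ Zset) (hne : p ≠ ![0, 0, 0]) : 1 ≤ p 1 := by
  obtain ⟨h0, h1⟩ := hp
  by_cases hy : p 1 = 0
  · exfalso
    apply hne
    have h2 : p 2 = 0 := by nlinarith [sq_nonneg (p 2)]
    funext i; fin_cases i <;> simp [h0, hy, h2]
  · nlinarith [sq_nonneg (p 2), pow_two_pos_of_ne_zero hy]

lemma isolated : Zset ∩ Metric.ball (![0, 0, 0] : Fin 3 → ℝ) 1 = {![0, 0, 0]} := by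
  apply subset_antisymm
  · rintro p ⟨hpZ, hpb⟩
    by_cases hp0 : p = ![0, 0, 0]
    · exact hp0
    · exfalso
      have hy := Zy_ge p hpZ hp0
      have hd : dist (p 1) ((![0, 0, 0] : Fin 3 → ℝ) 1) ≤ dist p ![0, 0, 0] :=
        dist_le_pi_dist p ![0, 0, 0] 1
      rw [Metric.mem_ball] at hpb
      have : dist (p 1) ((![0, 0, 0] : Fin 3 → ℝ) 1) < 1 := lt_of_le_of_lt hd hpb
      rw [show ((![0, 0, 0] : Fin 3 → ℝ) 1) = 0 by norm_num, Real.dist_eq, sub_zero, abs_lt]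
        at this
      linarith [this.2]
  · rintro p rfl
    refine ⟨⟨by norm_num, by norm_num; rfl⟩, Metric.mem_ball_self one_pos⟩

lemma branch_continuous (s : ℝ) :
    Continuous fun y : ℝ => (![0, y, s * Real.sqrt (y ^ 3 - y ^ 2)] : Fin 3 → ℝ) := by
  apply continuous_pi
  intro i
  fin_cases i
  · simpa using continuous_const
  · simpa using continuous_id'
  · simp only [Matrix.cons_val_two]
    show Continuous fun y : ℝ => s * Real.sqrt (y ^ 3 - y ^ 2)
    exact continuous_const.mul (Real.continuous_sqrt.comp (by fun_prop))

lemma branch_mem (s y : ℝ) (hs : s = 1 ∨ s = -1) (hy : 1 ≤ y) :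
    (![0, y, s * Real.sqrt (y ^ 3 - y ^ 2)] : Fin 3 → ℝ) ∈ Zset \ {![0, 0, 0]} := by
  have hnn : 0 ≤ y ^ 3 - y ^ 2 := by nlinarith
  have hs2 : s ^ 2 = 1 := by rcases hs with rfl | rfl <;> norm_num
  constructor
  · refine ⟨rfl, ?_⟩
    show y ^ 2 + (s * Real.sqrt (y ^ 3 - y ^ 2)) ^ 2 = y ^ 3
    rw [mul_pow, hs2, Real.sq_sqrt hnn]
    ring
  · intro hmem
    have := congrFun (Set.mem_singleton_iff.1 hmem) 1
    simp at this
    linarith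

lemma Z_decomp : Zset \ {![0, 0, 0]} =
    ((fun y : ℝ => (![0, y, 1 * Real.sqrt (y ^ 3 - y ^ 2)] : Fin 3 → ℝ)) '' Set.Ici 1) ∪
    ((fun y : ℝ => (![0, y, (-1) * Real.sqrt (y ^ 3 - y ^ 2)] : Fin 3 → ℝ)) '' Set.Ici 1) := by
  apply subset_antisymm
  · rintro p ⟨hpZ, hp0⟩
    have hy := Zy_ge p hpZ (by simpa using hp0)
    obtain ⟨h0, h1⟩ := hpZ
    have hsq : Real.sqrt ((p 1) ^ 3 - (p 1) ^ 2) = |p 2| := by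
      rw [show (p 1) ^ 3 - (p 1) ^ 2 = (p 2) ^ 2 by linarith, Real.sqrt_sq_eq_abs]
    by_cases hp2 : 0 ≤ p 2
    · left
      refine ⟨p 1, hy, ?_⟩
      funext i
      fin_cases i
      · exact h0.symm
      · rfl
      · show 1 * Real.sqrt ((p 1) ^ 3 - (p 1) ^ 2) = p 2
        rw [hsq, abs_of_nonneg hp2, one_mul]
    · right
      refine ⟨p 1, hy, ?_⟩
      funext i
      fin_cases i
      · exact h0.symm
      · rfl
      · show (-1) * Real.sqrt ((p 1) ^ 3 - (p 1) ^ 2) = p 2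
        rw [hsq, abs_of_neg (not_le.1 hp2)]
        ring
  · rintro p (⟨y, hy, rfl⟩ | ⟨y, hy, rfl⟩)
    · exact branch_mem 1 y (Or.inl rfl) hy
    · exact branch_mem (-1) y (Or.inr rfl) hy

lemma Z_conn : IsConnected (Zset \ {![0, 0, 0]}) := by
  rw [Z_decomp]
  apply IsConnected.union
  · refine ⟨![0, 1, 0], ⟨1, Set.self_mem_Ici, ?_⟩, ⟨1, Set.self_mem_Ici, ?_⟩⟩ <;>
      · funext i
        fin_cases i <;> simp
  · exact (isConnected_Ici).image _ (branch_continuous 1).continuousOn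
  · exact (isConnected_Ici).image _ (branch_continuous (-1)).continuousOn


end Aux

/-- Example 1.6 of the paper: `V = f⁻¹(0)` is the union of a cylinder `C` and the curve
`Z = {x = 0, y² + t² = y³}`, the Zariski closure of `V \ MV` is `Z`, and `Z` consists of a
connected curve (on which `y ≥ 1`) together with the isolated point `(0,0,0)`. -/
theorem example_cylinder_and_curve
    (V C Z : Set (Fin 3 → ℝ))
    (hV : V = {p : Fin 3 → ℝ |
      ((p 0) ^ 2 + ((p 1) ^ 2 + (p 2) ^ 2 - (p 1) ^ 3) ^ 2) *
        ((p 0) ^ 2 + (p 1 + 1) ^ 2 - 1) = 0})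
    (hC : C = {p : Fin 3 → ℝ | (p 0) ^ 2 + (p 1 + 1) ^ 2 = 1})
    (hZ : Z = {p : Fin 3 → ℝ | p 0 = 0 ∧ (p 1) ^ 2 + (p 2) ^ 2 = (p 1) ^ 3}) :
    V = C ∪ Z ∧
    zariskiClosure (V \ mainPart V) = Z ∧
    (![0, 0, 0] : Fin 3 → ℝ) ∈ Z ∧
    (∃ ε > (0 : ℝ), Z ∩ Metric.ball (![0, 0, 0] : Fin 3 → ℝ) ε = {![0, 0, 0]}) ∧
    IsConnected (Z \ {![0, 0, 0]}) ∧
    (∀ p ∈ Z \ ({![0, 0, 0]} : Set (Fin 3 → ℝ)), 1 ≤ p 1) := by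
  subst hV hC hZ
  refine ⟨V_eq, ?_, ⟨by norm_num, by norm_num; rfl⟩, ⟨1, one_pos, isolated⟩, Z_conn, ?_⟩
  · show zariskiClosure (Vset \ mainPart Vset) = Zset
    rw [mainV]
    exact zar
  · intro p hp
    exact Zy_ge p hp.1 (by simpa using hp.2)


end Koike
end
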